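/- arXiv:1907.06815 — 4 statements merged into one kernel-verified Lean document; each statement's English description precedes it below -/
import Mathlib

section
/- Let F be a regular family of finite subsets of ℕ containing all singletons, and let n ∈ ℕ be such that {n} is not maximal in F. Then there exists a sequence of finite sets G₁ < G₂ < ... (each Gᵢ entirely to the right of n, and Gᵢ entirely below G_{i+1}) such that |Gᵢ| ≤ |G_{i+1}| and Gᵢ ∪ {n} is maximal in F for every i. -/
/-- The Schreier family: the empty set together with all finite nonempty sets `F` of
positive integers with `|F| ≤ min F`. -/
def Schreier : Set (Finset ℕ) :=
  {F | F = ∅ ∨ ∃ h : F.Nonempty, (∀ n ∈ F, 0 < n) ∧ F.card ≤ F.min' h}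

/-- A family of finite subsets of `ℕ` is hereditary if it is closed under subsets. -/
def Hereditary (𝓕 : Set (Finset ℕ)) : Prop := ∀ F ∈ 𝓕, ∀ E ⊆ F, E ∈ 𝓕

/-- A family is spreading if it is stable under moving elements to the right. -/
def Spreading (𝓕 : Set (Finset ℕ)) : Prop :=
  ∀ F ∈ 𝓕, ∀ σ : ℕ → ℕ, (∀ n ∈ F, n ≤ σ n) →
    (∀ m ∈ F, ∀ n ∈ F, m < n → σ m < σ n) → F.image σ ∈ 𝓕

/-- A family is compact if, identified with a set of characteristic functions in the
Cantor space `ℕ → Bool`, it is closed (equivalently, compact). -/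
def CompactFamily (𝓕 : Set (Finset ℕ)) : Prop :=
  IsClosed {f : ℕ → Bool | ∃ F ∈ 𝓕, f = fun n => decide (n ∈ F)}

/-- A regular family: hereditary, spreading, compact, and containing all singletons. -/
def RegularFamily (𝓕 : Set (Finset ℕ)) : Prop :=
  Hereditary 𝓕 ∧ Spreading 𝓕 ∧ CompactFamily 𝓕 ∧ ∀ n : ℕ, {n} ∈ 𝓕

/-- `F` is a maximal member of `𝓕` with respect to inclusion. -/
def MaximalIn (𝓕 : Set (Finset ℕ)) (F : Finset ℕ) : Prop :=
  F ∈ 𝓕 ∧ ∀ G ∈ 𝓕, F ⊆ G → F = G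

/-!
Compactness of `𝓕` forbids infinite strictly increasing chains, so for `B ≥ n` every
`H > B` with `{n} ∪ H ∈ 𝓕` extends to some `F > B` that is maximal with this property.
Since spreading lets any element be replaced by a number above all the others, `{n} ∪ F`
is then maximal in `𝓕` itself. The pair `{n, b}` supplied by the non-maximality of `{n}`
starts the sequence; each next term extends a translate of the previous term `G` beyond
`max G`.
-/
open Filter Topology Finset

theorem exists_seq_of_forall_exists {α : Type*} {P : α → Prop} {R : α → α → Prop}
    (h₀ : ∃ a, P a) (h : ∀ a, P a → ∃ b, P b ∧ R a b) :
    ∃ f : ℕ → α, ∀ i, P (f i) ∧ R (f i) (f (i + 1)) := by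
  choose! g hgP hgR using h
  obtain ⟨a, ha⟩ := h₀
  have hP : ∀ i, P (g^[i] a) := fun i => by
    induction i with
    | zero => exact ha
    | succ i ih => rw [Function.iterate_succ_apply']; exact hgP _ ih
  refine ⟨fun i => g^[i] a, fun i => ⟨hP i, ?_⟩⟩
  simpa only [Function.iterate_succ_apply'] using hgR _ (hP i)

section

variable {𝓕 : Set (Finset ℕ)}

open Classical in
lemma tendsto_decide_mem_of_monotone {f : ℕ → Finset ℕ} (hf : Monotone f) :
    Tendsto (fun k m => decide (m ∈ f k)) atTop (𝓝 fun m => decide (∃ k, m ∈ f k)) := by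
  rw [tendsto_pi_nhds]
  intro m
  apply tendsto_nhds_of_eventually_eq
  by_cases hm : ∃ k, m ∈ f k
  · obtain ⟨k₀, hk₀⟩ := hm
    filter_upwards [eventually_ge_atTop k₀] with k hk
    simpa [hf hk hk₀] using ⟨k₀, hk₀⟩
  · push Not at hm
    exact Eventually.of_forall fun k => by simp [hm]

/-- The union of a strictly increasing chain in `𝓕` would be a limit point of `𝓕`, hence a
finite member containing every set of the chain. -/
theorem CompactFamily.wellFoundedOn (h : CompactFamily 𝓕) : 𝓕.WellFoundedOn (· > ·) := by
  rw [Set.wellFoundedOn_iff_no_descending_seq]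
  intro f hf
  have hmono : StrictMono f := fun i j hij => f.map_rel_iff.2 hij
  obtain ⟨F, hF, hFf⟩ := h.mem_of_tendsto (tendsto_decide_mem_of_monotone hmono.monotone)
    (Eventually.of_forall fun k => ⟨f k, hf k, rfl⟩)
  have hsub : ∀ k, f k ⊆ F := fun k m hm => by
    have hmF := congrFun hFf m
    simp only [decide_eq_decide] at hmF
    exact hmF.1 ⟨k, hm⟩
  have hcard := (card_strictMono.comp hmono).id_le (#F + 1)
  have := card_le_card (hsub (#F + 1))
  simp only [id, Function.comp] at hcard
  omega

namespace Spreading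

/-- The spreading map fixes the elements below `a` and sends every other element to the
next element of `insert b A`. -/
theorem insert_mem_of_forall_lt (h : Spreading 𝓕) {A : Finset ℕ} {a b : ℕ} (ha : a ∉ A)
    (hS : insert a A ∈ 𝓕) (hb : ∀ x ∈ insert a A, x < b) : insert b A ∈ 𝓕 := by
  set T := insert b A
  let next : ℕ → ℕ := fun x => sInf {t | t ∈ T ∧ x < t}
  have next_spec : ∀ x ∈ insert a A, next x ∈ T ∧ x < next x := fun x hx =>
    Nat.sInf_mem (s := {t | t ∈ T ∧ x < t}) ⟨b, mem_insert_self b A, hb x hx⟩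
  have next_le : ∀ x, ∀ t ∈ T, x < t → next x ≤ t := fun x t ht hxt => Nat.sInf_le ⟨ht, hxt⟩
  have mem_T : ∀ x ∈ insert a A, x ≠ a → x ∈ T := fun x hx hxa =>
    mem_insert_of_mem ((mem_insert.1 hx).resolve_left hxa)
  let σ : ℕ → ℕ := fun x => if x < a then x else next x
  have hle : ∀ x ∈ insert a A, x ≤ σ x := fun x hx => by
    by_cases hxa : x < a
    · simp [σ, hxa]
    · simpa [σ, hxa] using (next_spec x hx).2.le
  have hmono : StrictMonoOn σ ↑(insert a A) := by
    intro x hx y hy hxy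
    by_cases hya : y < a
    · simp [σ, hya, hxy.trans hya, hxy]
    by_cases hxa : x < a
    · simpa [σ, hxa, hya] using hxa.trans_le (not_lt.1 hya) |>.trans (next_spec y hy).2
    · simp only [σ, hxa, hya, if_false]
      exact (next_le x y (mem_T y hy (by omega)) hxy).trans_lt (next_spec y hy).2
  have himage : (insert a A).image σ ⊆ T := by
    intro t ht
    obtain ⟨x, hx, rfl⟩ := mem_image.1 ht
    by_cases hxa : x < a
    · simpa [σ, hxa] using mem_T x hx hxa.ne
    · simpa [σ, hxa] using (next_spec x hx).1
  have hbA : b ∉ A := fun hbA => lt_irrefl b (hb b (mem_insert_of_mem hbA))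
  have hcard : #T ≤ #((insert a A).image σ) := by
    rw [card_image_of_injOn hmono.injOn, card_insert_of_notMem ha, card_insert_of_notMem hbA]
  rw [← eq_of_subset_of_card_le himage hcard]
  exact h _ hS σ hle hmono

theorem insert_image_add_mem (h : Spreading 𝓕) {G : Finset ℕ} {n : ℕ} (hG : ∀ a ∈ G, n < a)
    (hmem : insert n G ∈ 𝓕) (k : ℕ) : insert n (G.image (· + k)) ∈ 𝓕 := by
  let σ : ℕ → ℕ := fun x => if x ≤ n then x else x + k
  have himage : (insert n G).image σ = insert n (G.image (· + k)) := by
    rw [image_insert]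
    congr 1
    · simp [σ]
    · exact image_congr fun x hx => if_neg (hG x hx).not_ge
  rw [← himage]
  exact h _ hmem σ (fun x _ => by dsimp only [σ]; split <;> omega)
    (fun x _ y _ hxy => by dsimp only [σ]; split_ifs <;> omega)

end Spreading

def linkAbove (𝓕 : Set (Finset ℕ)) (n B : ℕ) : Set (Finset ℕ) :=
  {F | (∀ a ∈ F, B < a) ∧ insert n F ∈ 𝓕}

theorem CompactFamily.wellFoundedOn_linkAbove (h : CompactFamily 𝓕) {n B : ℕ} (hnB : n ≤ B) :
    (linkAbove 𝓕 n B).WellFoundedOn (· > ·) := by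
  refine (h.wellFoundedOn.mapsTo (insert n) fun F hF => hF.2).mono' ?_
  intro F hF F' _ hlt
  obtain ⟨x, hxF, hxF'⟩ := exists_of_ssubset hlt
  have hxn : x ≠ n := fun hxn => (hF.1 x hxF).not_ge (hxn ▸ hnB)
  refine (ssubset_iff_of_subset (insert_subset_insert n hlt.subset)).2 ⟨x, ?_, ?_⟩
  · exact mem_insert_of_mem hxF
  · simp [hxn, hxF']

/-- An extra element `m` of a larger set can be traded, by spreading, for a new maximum
beyond `B`. -/
theorem maximalIn_insert_of_maximal_linkAbove (hh : Hereditary 𝓕) (hs : Spreading 𝓕)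
    {n B : ℕ} {F : Finset ℕ} (hF : Maximal (· ∈ linkAbove 𝓕 n B) F) :
    MaximalIn 𝓕 (insert n F) := by
  refine ⟨hF.1.2, fun E hE hFE => ?_⟩
  by_contra hne
  obtain ⟨m, hmE, hm⟩ := exists_of_ssubset (hFE.ssubset_of_ne hne)
  have hmem : insert m (insert n F) ∈ 𝓕 := hh E hE _ (insert_subset hmE hFE)
  set b := max B ((insert m (insert n F)).sup id) + 1
  have hb : ∀ x ∈ insert m (insert n F), x < b := fun x hx =>
    Nat.lt_succ_of_le (le_max_of_le_right (le_sup (f := id) hx))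
  have hbF : insert b F ∈ linkAbove 𝓕 n B := by
    refine ⟨fun a ha => ?_, ?_⟩
    · rcases mem_insert.1 ha with rfl | ha
      · omega
      · exact hF.1.1 a ha
    · rw [insert_comm]
      exact hs.insert_mem_of_forall_lt hm hmem hb
  have hbF' : b ∈ F := hF.2 hbF (subset_insert b F) (mem_insert_self b F)
  exact (hb b (mem_insert_of_mem (mem_insert_of_mem hbF'))).false

theorem exists_maximalIn_insert (hh : Hereditary 𝓕) (hs : Spreading 𝓕) (hc : CompactFamily 𝓕)
    {n B : ℕ} (hnB : n ≤ B) {H : Finset ℕ} (hH : H ∈ linkAbove 𝓕 n B) :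
    ∃ F, H ⊆ F ∧ (∀ a ∈ F, B < a) ∧ MaximalIn 𝓕 (insert n F) := by
  obtain ⟨F, ⟨hF, hHF⟩, hmax⟩ :=
    ((hc.wellFoundedOn_linkAbove hnB).subset (s := {F ∈ linkAbove 𝓕 n B | H ⊆ F})
      fun _ hF => hF.1).exists_maximal ⟨H, hH, subset_rfl⟩
  exact ⟨F, hHF, hF.1, maximalIn_insert_of_maximal_linkAbove hh hs
    ⟨hF, fun F' hF' hFF' => hmax ⟨hF', hHF.trans hFF'⟩ hFF'⟩⟩

theorem exists_singleton_mem_linkAbove (hh : Hereditary 𝓕) (hs : Spreading 𝓕) {n : ℕ}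
    (hn : {n} ∈ 𝓕) (hnmax : ¬ MaximalIn 𝓕 {n}) : ∃ b, {b} ∈ linkAbove 𝓕 n n := by
  obtain ⟨E, hE, hnE, hne⟩ : ∃ E ∈ 𝓕, {n} ⊆ E ∧ {n} ≠ E := by
    by_contra! h
    exact hnmax ⟨hn, h⟩
  obtain ⟨m, hmE, hmn⟩ := exists_of_ssubset (hnE.ssubset_of_ne hne)
  have hmem : insert m {n} ∈ 𝓕 := hh E hE _ (insert_subset hmE hnE)
  refine ⟨max m n + 1, by simp, ?_⟩
  rw [pair_comm]
  exact hs.insert_mem_of_forall_lt hmn hmem (by simp)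

theorem exists_maximalIn_insert_above (hh : Hereditary 𝓕) (hs : Spreading 𝓕)
    (hc : CompactFamily 𝓕) {n : ℕ} {G : Finset ℕ} (hG : G.Nonempty) (hGn : ∀ a ∈ G, n < a)
    (hmem : insert n G ∈ 𝓕) :
    ∃ G', (G'.Nonempty ∧ (∀ a ∈ G', n < a) ∧ MaximalIn 𝓕 (insert n G')) ∧
      (∀ a ∈ G, ∀ b ∈ G', a < b) ∧ #G ≤ #G' := by
  set B := G.max' hG
  have hnB : n < B := hGn B (max'_mem G hG)
  have hH : G.image (· + B) ∈ linkAbove 𝓕 n B := by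
    refine ⟨fun a ha => ?_, hs.insert_image_add_mem hGn hmem B⟩
    obtain ⟨x, hx, rfl⟩ := mem_image.1 ha
    have := hGn x hx
    omega
  obtain ⟨F, hHF, hFB, hFmax⟩ := exists_maximalIn_insert hh hs hc hnB.le hH
  refine ⟨F, ⟨(hG.image _).mono hHF, fun a ha => hnB.trans (hFB a ha), hFmax⟩,
    fun a ha b hb => (le_max' G a ha).trans_lt (hFB b hb), ?_⟩
  calc #G = #(G.image (· + B)) := (card_image_of_injective _ (add_left_injective B)).symm
    _ ≤ #F := card_le_card hHF

end

/-- If `{n}` is not maximal in a regular family `𝓕`, there is a sequence of finite sets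
`n < G₁ < G₂ < ⋯` with nondecreasing cardinalities such that each `Gᵢ ∪ {n}` is maximal
in `𝓕`. -/
theorem regular_spreading_sequence (𝓕 : Set (Finset ℕ)) (hreg : RegularFamily 𝓕)
    (n : ℕ) (hn : ¬ MaximalIn 𝓕 {n}) :
    ∃ G : ℕ → Finset ℕ,
      (∀ i, (G i).Nonempty) ∧
      (∀ i, ∀ a ∈ G i, n < a) ∧
      (∀ i, ∀ a ∈ G i, ∀ b ∈ G (i + 1), a < b) ∧
      (∀ i, (G i).card ≤ (G (i + 1)).card) ∧
      (∀ i, MaximalIn 𝓕 (insert n (G i))) := by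
  obtain ⟨hh, hs, hc, hsingleton⟩ := hreg
  obtain ⟨b, hb⟩ := exists_singleton_mem_linkAbove hh hs (hsingleton n) hn
  obtain ⟨G₀, hbG₀, hG₀n, hG₀max⟩ := exists_maximalIn_insert hh hs hc le_rfl hb
  obtain ⟨G, hG⟩ := exists_seq_of_forall_exists
    ⟨G₀, ⟨b, singleton_subset_iff.1 hbG₀⟩, hG₀n, hG₀max⟩
    fun G hG => exists_maximalIn_insert_above hh hs hc hG.1 hG.2.1 hG.2.2.1
  exact ⟨G, fun i => (hG i).1.1, fun i => (hG i).1.2.1, fun i => (hG i).2.1,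
    fun i => (hG i).2.2, fun i => (hG i).1.2.2⟩
end

section
/- Let F be a hereditary family of finite subsets of ℕ, and consider the combinatorial norm ‖x‖ = sup{∑_{i∈F} |x(i)| : F ∈ F} on finitely supported scalar sequences. For a finitely supported functional x* = ∑_{i∈A} θᵢ eᵢ* with each |θᵢ| = 1, the dual norm of x* equals 1 if A ∈ F, and is strictly greater than 1 if A ∉ F (in the latter case the dual norm is at least |A|/(|A|−1)). -/
/-- The combinatorial norm `‖x‖ = sup { ∑_{i ∈ F} |x i| : F ∈ 𝓕 }` on `c₀₀`. -/
noncomputable def combNorm {𝕜 : Type*} [RCLike 𝕜] (𝓕 : Set (Finset ℕ)) (x : ℕ →₀ 𝕜) : ℝ :=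
  sSup {r : ℝ | ∃ F ∈ 𝓕, r = ∑ i ∈ F, ‖x i‖}

/-- The dual norm `‖f‖ = sup { |f x| : ‖x‖ ≤ 1 }` of a linear functional on `c₀₀`. -/
noncomputable def dualNorm {𝕜 : Type*} [RCLike 𝕜] (𝓕 : Set (Finset ℕ))
    (f : (ℕ →₀ 𝕜) →ₗ[𝕜] 𝕜) : ℝ :=
  sSup {r : ℝ | ∃ x : ℕ →₀ 𝕜, combNorm 𝓕 x ≤ 1 ∧ r = ‖f x‖}

/-!
Write `f = ∑_{i∈A} θᵢ eᵢ*`. Pointwise `|f x| ≤ ∑_{i∈A} |x i|`, so `‖f‖ ≤ 1` when `A ∈ 𝓕`.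
Testing `f` against `x = c ∑_{i∈B} θ̄ᵢ eᵢ` for `B ⊆ A` gives `f x = c |B|`, while
`‖x‖ = c · max_{F∈𝓕} |F ∩ B|`. A single point of `A` gives `‖f‖ ≥ 1`. If `A ∉ 𝓕`, heredity forces
`|F ∩ A| ≤ |A| - 1` for every `F ∈ 𝓕`, so `B = A` and `c = 1/(|A| - 1)` give `‖f‖ ≥ |A|/(|A| - 1)`.
-/

open Finset

namespace CombinatorialSpace

variable {𝕜 : Type*} [RCLike 𝕜] {𝓕 : Set (Finset ℕ)}

lemma combNorm_bddAbove (𝓕 : Set (Finset ℕ)) (x : ℕ →₀ 𝕜) :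
    BddAbove {r : ℝ | ∃ F ∈ 𝓕, r = ∑ i ∈ F, ‖x i‖} := by
  refine ⟨∑ i ∈ x.support, ‖x i‖, ?_⟩
  rintro r ⟨F, -, rfl⟩
  calc ∑ i ∈ F, ‖x i‖ ≤ ∑ i ∈ F ∪ x.support, ‖x i‖ :=
        sum_le_sum_of_subset_of_nonneg subset_union_left fun i _ _ => norm_nonneg _
    _ = ∑ i ∈ x.support, ‖x i‖ :=
        (sum_subset subset_union_right fun i _ hi => by
          simp [Finsupp.notMem_support_iff.mp hi]).symm

lemma sum_norm_le_combNorm {F : Finset ℕ} (hF : F ∈ 𝓕) (x : ℕ →₀ 𝕜) :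
    ∑ i ∈ F, ‖x i‖ ≤ combNorm 𝓕 x :=
  le_csSup (combNorm_bddAbove 𝓕 x) ⟨F, hF, rfl⟩

lemma norm_apply_le_combNorm {i : ℕ} (hi : {i} ∈ 𝓕) (x : ℕ →₀ 𝕜) :
    ‖x i‖ ≤ combNorm 𝓕 x := by
  simpa using sum_norm_le_combNorm hi x

lemma combNorm_le {x : ℕ →₀ 𝕜} {c : ℝ} (hc : 0 ≤ c) (h : ∀ F ∈ 𝓕, ∑ i ∈ F, ‖x i‖ ≤ c) :
    combNorm 𝓕 x ≤ c :=
  Real.sSup_le (by rintro r ⟨F, hF, rfl⟩; exact h F hF) hc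

lemma dualNorm_le {f : (ℕ →₀ 𝕜) →ₗ[𝕜] 𝕜} {c : ℝ} (hc : 0 ≤ c)
    (h : ∀ x, combNorm 𝓕 x ≤ 1 → ‖f x‖ ≤ c) : dualNorm 𝓕 f ≤ c :=
  Real.sSup_le (by rintro r ⟨x, hx, rfl⟩; exact h x hx) hc

lemma norm_apply_le_dualNorm {f : (ℕ →₀ 𝕜) →ₗ[𝕜] 𝕜} {c : ℝ}
    (hbdd : ∀ x, combNorm 𝓕 x ≤ 1 → ‖f x‖ ≤ c) {x : ℕ →₀ 𝕜} (hx : combNorm 𝓕 x ≤ 1) :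
    ‖f x‖ ≤ dualNorm 𝓕 f :=
  le_csSup ⟨c, by rintro r ⟨y, hy, rfl⟩; exact hbdd y hy⟩ ⟨x, hx, rfl⟩

noncomputable def signFunctional (A : Finset ℕ) (θ : ℕ → 𝕜) : (ℕ →₀ 𝕜) →ₗ[𝕜] 𝕜 :=
  ∑ i ∈ A, θ i • (Finsupp.lapply i : (ℕ →₀ 𝕜) →ₗ[𝕜] 𝕜)

lemma signFunctional_apply (A : Finset ℕ) (θ : ℕ → 𝕜) (x : ℕ →₀ 𝕜) :
    signFunctional A θ x = ∑ i ∈ A, θ i * x i := by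
  simp [signFunctional, Finsupp.lapply_apply]

variable {A : Finset ℕ} {θ : ℕ → 𝕜}

lemma norm_signFunctional_apply_le (hθ : ∀ i ∈ A, ‖θ i‖ = 1) (x : ℕ →₀ 𝕜) :
    ‖signFunctional A θ x‖ ≤ ∑ i ∈ A, ‖x i‖ := by
  rw [signFunctional_apply]
  refine (norm_sum_le _ _).trans_eq (sum_congr rfl fun i hi => ?_)
  rw [norm_mul, hθ i hi, one_mul]

lemma norm_signFunctional_apply_le_card_mul (hsing : ∀ n : ℕ, {n} ∈ 𝓕)
    (hθ : ∀ i ∈ A, ‖θ i‖ = 1) (x : ℕ →₀ 𝕜) :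
    ‖signFunctional A θ x‖ ≤ #A * combNorm 𝓕 x :=
  calc ‖signFunctional A θ x‖ ≤ ∑ i ∈ A, ‖x i‖ := norm_signFunctional_apply_le hθ x
    _ ≤ ∑ _i ∈ A, combNorm 𝓕 x := sum_le_sum fun i _ => norm_apply_le_combNorm (hsing i) x
    _ = #A * combNorm 𝓕 x := by rw [sum_const, nsmul_eq_mul]

lemma dualNorm_signFunctional_le_one (hA : A ∈ 𝓕) (hθ : ∀ i ∈ A, ‖θ i‖ = 1) :
    dualNorm 𝓕 (signFunctional A θ) ≤ 1 :=
  dualNorm_le zero_le_one fun x hx =>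
    (norm_signFunctional_apply_le hθ x).trans ((sum_norm_le_combNorm hA x).trans hx)

noncomputable def conjSignVector (B : Finset ℕ) (θ : ℕ → 𝕜) (c : ℝ) : ℕ →₀ 𝕜 :=
  Finsupp.indicator B fun i _ => (c : 𝕜) * starRingEnd 𝕜 (θ i)

variable {B : Finset ℕ} {c : ℝ}

lemma norm_conjSignVector_apply (hθ : ∀ i ∈ B, ‖θ i‖ = 1) (hc : 0 ≤ c) (i : ℕ) :
    ‖conjSignVector B θ c i‖ = if i ∈ B then c else 0 := by
  unfold conjSignVector
  rw [Finsupp.indicator_apply]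
  split_ifs with hi
  · rw [norm_mul, RCLike.norm_conj, hθ i hi, mul_one, RCLike.norm_ofReal, abs_of_nonneg hc]
  · exact norm_zero

lemma combNorm_conjSignVector_le (hθ : ∀ i ∈ B, ‖θ i‖ = 1) (hc : 0 ≤ c) {m : ℕ}
    (hm : ∀ F ∈ 𝓕, #(F ∩ B) ≤ m) : combNorm 𝓕 (conjSignVector B θ c) ≤ c * m := by
  refine combNorm_le (by positivity) fun F hF => ?_
  simp_rw [norm_conjSignVector_apply hθ hc, sum_ite_mem, sum_const, nsmul_eq_mul]
  rw [mul_comm]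
  gcongr
  exact_mod_cast hm F hF

lemma signFunctional_conjSignVector (hBA : B ⊆ A) (hθ : ∀ i ∈ B, ‖θ i‖ = 1) :
    signFunctional A θ (conjSignVector B θ c) = c * #B := by
  rw [signFunctional_apply, ← sum_subset hBA fun i _ hi => by
    simp [conjSignVector, Finsupp.indicator_apply, hi]]
  have hterm : ∀ i ∈ B, θ i * conjSignVector B θ c i = c := fun i hi => by
    rw [conjSignVector, Finsupp.indicator_apply, dif_pos hi, mul_left_comm, RCLike.mul_conj,
      hθ i hi]
    simp
  rw [sum_congr rfl hterm, sum_const, nsmul_eq_mul, mul_comm]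

lemma card_div_le_dualNorm_signFunctional (hsing : ∀ n : ℕ, {n} ∈ 𝓕)
    (hθ : ∀ i ∈ A, ‖θ i‖ = 1) (hBA : B ⊆ A) {m : ℕ} (hm : ∀ F ∈ 𝓕, #(F ∩ B) ≤ m) :
    (#B : ℝ) / m ≤ dualNorm 𝓕 (signFunctional A θ) := by
  have hθB : ∀ i ∈ B, ‖θ i‖ = 1 := fun i hi => hθ i (hBA hi)
  have hx : combNorm 𝓕 (conjSignVector B θ (1 / m)) ≤ 1 :=
    (combNorm_conjSignVector_le hθB (by positivity) hm).trans (by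
      rcases Nat.eq_zero_or_pos m with rfl | hm0
      · simp
      · rw [one_div_mul_cancel (by positivity)])
  -- without a bound on the values, `dualNorm` would be the junk `sSup` of an unbounded set
  have hbdd (x : ℕ →₀ 𝕜) (hx : combNorm 𝓕 x ≤ 1) : ‖signFunctional A θ x‖ ≤ #A :=
    (norm_signFunctional_apply_le_card_mul hsing hθ x).trans
      (mul_le_of_le_one_right (Nat.cast_nonneg _) hx)
  calc (#B : ℝ) / m = ‖signFunctional A θ (conjSignVector B θ (1 / m))‖ := by
        rw [signFunctional_conjSignVector hBA hθB]
        simp [div_eq_inv_mul]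
    _ ≤ dualNorm 𝓕 (signFunctional A θ) := norm_apply_le_dualNorm hbdd hx

lemma card_inter_le_card_sub_one (hher : Hereditary 𝓕) (hAF : A ∉ 𝓕) {F : Finset ℕ}
    (hF : F ∈ 𝓕) : #(F ∩ A) ≤ #A - 1 := by
  have hne : F ∩ A ≠ A := fun h => hAF (h ▸ hher F hF _ inter_subset_left)
  have := card_lt_card (inter_subset_right.ssubset_of_ne hne)
  omega

lemma two_le_card_of_notMem (hsing : ∀ n : ℕ, {n} ∈ 𝓕) (hA : A.Nonempty) (hAF : A ∉ 𝓕) :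
    2 ≤ #A := by
  have hcard : #A ≠ 1 := fun h => by
    obtain ⟨a, rfl⟩ := card_eq_one.mp h
    exact hAF (hsing a)
  have := hA.card_pos
  omega

end CombinatorialSpace

open CombinatorialSpace in
theorem dualNorm_signed_sum_general {𝕜 : Type*} [RCLike 𝕜] (𝓕 : Set (Finset ℕ))
    (hher : Hereditary 𝓕) (hsing : ∀ n : ℕ, {n} ∈ 𝓕)
    (A : Finset ℕ) (hA : A.Nonempty) (θ : ℕ → 𝕜) (hθ : ∀ i ∈ A, ‖θ i‖ = 1) :
    (A ∈ 𝓕 → dualNorm 𝓕 (∑ i ∈ A, θ i • (Finsupp.lapply i : (ℕ →₀ 𝕜) →ₗ[𝕜] 𝕜)) = 1) ∧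
    (A ∉ 𝓕 →
      (A.card : ℝ) / ((A.card : ℝ) - 1) ≤
        dualNorm 𝓕 (∑ i ∈ A, θ i • (Finsupp.lapply i : (ℕ →₀ 𝕜) →ₗ[𝕜] 𝕜)) ∧
      1 < dualNorm 𝓕 (∑ i ∈ A, θ i • (Finsupp.lapply i : (ℕ →₀ 𝕜) →ₗ[𝕜] 𝕜))) := by
  refine ⟨fun hAF => ?_, fun hAF => ?_⟩
  · obtain ⟨j, hj⟩ := hA
    have hlower := card_div_le_dualNorm_signFunctional (B := {j}) (m := 1) hsing hθ
      (singleton_subset_iff.2 hj) fun F _ => (card_le_card inter_subset_right).trans_eq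
        (card_singleton j)
    rw [card_singleton, Nat.cast_one, div_one] at hlower
    exact le_antisymm (dualNorm_signFunctional_le_one hAF hθ) hlower
  · have h2 := two_le_card_of_notMem hsing hA hAF
    have hlower := card_div_le_dualNorm_signFunctional hsing hθ subset_rfl
      fun F hF => card_inter_le_card_sub_one hher hAF hF
    rw [Nat.cast_sub (by omega), Nat.cast_one] at hlower
    have h2' : (2 : ℝ) ≤ #A := by exact_mod_cast h2
    exact ⟨hlower, ((one_lt_div (by linarith)).2 (by linarith)).trans_le hlower⟩

/-- For a hereditary family and a sign-valued functional `∑_{i∈A} θᵢ eᵢ*`, the dual norm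
is exactly `1` when `A ∈ 𝓕`, and at least `|A|/(|A|-1) > 1` when `A ∉ 𝓕`. -/
theorem dualNorm_signed_sum {𝕜 : Type*} [RCLike 𝕜] (𝓕 : Set (Finset ℕ))
    (hher : Hereditary 𝓕) (hempty : ∅ ∈ 𝓕) (hsing : ∀ n : ℕ, {n} ∈ 𝓕)
    (A : Finset ℕ) (hA : A.Nonempty) (θ : ℕ → 𝕜) (hθ : ∀ i ∈ A, ‖θ i‖ = 1) :
    (A ∈ 𝓕 → dualNorm 𝓕 (∑ i ∈ A, θ i • (Finsupp.lapply i : (ℕ →₀ 𝕜) →ₗ[𝕜] 𝕜)) = 1) ∧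
    (A ∉ 𝓕 →
      (A.card : ℝ) / ((A.card : ℝ) - 1) ≤
        dualNorm 𝓕 (∑ i ∈ A, θ i • (Finsupp.lapply i : (ℕ →₀ 𝕜) →ₗ[𝕜] 𝕜)) ∧
      1 < dualNorm 𝓕 (∑ i ∈ A, θ i • (Finsupp.lapply i : (ℕ →₀ 𝕜) →ₗ[𝕜] 𝕜))) :=
  dualNorm_signed_sum_general 𝓕 hher hsing A hA θ hθ
end

section
/- For every countable ordinal α, the Schreier family S_α is spreading: if F ∈ S_α and σ : F → ℕ is an injective order-preserving map with σ(n) ≥ n for all n ∈ F, then σ(F) ∈ S_α. -/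
/-- The successor step of the Schreier hierarchy: admissible unions of sets of the
previous family. -/
def SchreierSucc (𝓐 : Set (Finset ℕ)) : Set (Finset ℕ) :=
  {F | F = ∅ ∨ ∃ (k : ℕ) (E : Fin k → Finset ℕ) (hne : ∀ j, (E j).Nonempty),
    (∀ j, E j ∈ 𝓐) ∧
    (∀ j j' : Fin k, j < j' → ∀ a ∈ E j, ∀ b ∈ E j', a < b) ∧
    (Finset.univ.image (fun j => (E j).min' (hne j)) ∈ Schreier) ∧
    F = Finset.univ.biUnion E}

/-- A system of Schreier families `S_α`, with a fixed choice, for each countable limit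
ordinal, of an increasing sequence of ordinals converging to it. -/
structure SchreierSystem where
  fam : Ordinal → Set (Finset ℕ)
  approx : Ordinal → ℕ → Ordinal
  one_eq : fam 1 = Schreier
  succ_eq : ∀ α : Ordinal, fam (α + 1) = SchreierSucc (fam α)
  approx_pos : ∀ α : Ordinal, ∀ n : ℕ, 1 ≤ approx α n
  approx_strictMono : ∀ α : Ordinal, Order.IsSuccLimit α → α.card ≤ Cardinal.aleph0 →
    StrictMono (approx α)
  approx_lt : ∀ α : Ordinal, Order.IsSuccLimit α → α.card ≤ Cardinal.aleph0 → ∀ n, approx α n < α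
  approx_sup : ∀ α : Ordinal, Order.IsSuccLimit α → α.card ≤ Cardinal.aleph0 →
    (⨆ n, approx α n) = α
  limit_eq : ∀ α : Ordinal, Order.IsSuccLimit α → α.card ≤ Cardinal.aleph0 →
    fam α = {F | F = ∅ ∨ ∃ h : F.Nonempty, ∃ n : ℕ,
      1 ≤ n ∧ n ≤ F.min' h ∧ F ∈ fam (approx α n)}

/-
Spreading passes through each clause of the definition: moving the elements of a set to the right
by a strictly increasing map keeps its cardinality, does not decrease its minimum, keeps the order
of consecutive blocks, and sends the minima of the blocks to the minima of the moved blocks. So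
`S_1` is spreading, and spreading is preserved by the successor and the limit steps.
-/

theorem Finset.min'_image_of_monotoneOn {α β : Type*} [LinearOrder α] [LinearOrder β]
    {f : α → β} {s : Finset α} (hf : MonotoneOn f s) (h : s.Nonempty) :
    (s.image f).min' (h.image f) = f (s.min' h) :=
  le_antisymm (min'_le _ _ (mem_image_of_mem f (min'_mem s h))) <| le_min' _ _ _ fun _ hy => by
    obtain ⟨x, hx, rfl⟩ := mem_image.mp hy
    exact hf (min'_mem s h) hx (min'_le s x hx)

theorem spreading_iff {𝓕 : Set (Finset ℕ)} :
    Spreading 𝓕 ↔ ∀ F ∈ 𝓕, ∀ σ : ℕ → ℕ, (∀ n ∈ F, n ≤ σ n) → StrictMonoOn σ F →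
      F.image σ ∈ 𝓕 :=
  Iff.rfl

theorem schreier_spreading : Spreading Schreier := by
  refine spreading_iff.2 fun F hF σ hσ hmono => ?_
  rcases hF with rfl | ⟨hne, hpos, hcard⟩
  · exact Or.inl (Finset.image_empty σ)
  refine Or.inr ⟨hne.image σ, ?_, ?_⟩
  · simp only [Finset.mem_image, forall_exists_index, and_imp, forall_apply_eq_imp_iff₂]
    exact fun n hn => (hpos n hn).trans_le (hσ n hn)
  · calc (F.image σ).card = F.card := Finset.card_image_of_injOn hmono.injOn
      _ ≤ F.min' hne := hcard
      _ ≤ σ (F.min' hne) := hσ _ (F.min'_mem hne)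
      _ = (F.image σ).min' (hne.image σ) :=
        (Finset.min'_image_of_monotoneOn hmono.monotoneOn hne).symm

theorem Spreading.schreierSucc {𝓐 : Set (Finset ℕ)} (hA : Spreading 𝓐) :
    Spreading (SchreierSucc 𝓐) := by
  refine spreading_iff.2 fun F hF σ hσ hmono => ?_
  rcases hF with rfl | ⟨k, E, hne, hEA, hord, hmins, rfl⟩
  · exact Or.inl (Finset.image_empty σ)
  have hsub : ∀ j, E j ⊆ Finset.univ.biUnion E := fun j => Finset.subset_biUnion_of_mem E (by simp)
  set mins := Finset.univ.image fun j => (E j).min' (hne j)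
  have hmins_sub : mins ⊆ Finset.univ.biUnion E := by
    simp only [mins, Finset.image_subset_iff]
    exact fun j _ => hsub j ((E j).min'_mem (hne j))
  have hmins_image : (Finset.univ.image fun j => ((E j).image σ).min' ((hne j).image σ))
      = mins.image σ := by
    rw [Finset.image_image]
    exact Finset.image_congr fun j _ =>
      Finset.min'_image_of_monotoneOn (hmono.mono (hsub j)).monotoneOn (hne j)
  refine Or.inr ⟨k, fun j => (E j).image σ, fun j => (hne j).image σ, fun j => ?_, ?_, ?_,
    Finset.biUnion_image⟩
  · exact spreading_iff.1 hA _ (hEA j) σ (fun n hn => hσ n (hsub j hn)) (hmono.mono (hsub j))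
  · intro j j' hjj' _ hσa _ hσb
    obtain ⟨a, ha, rfl⟩ := Finset.mem_image.mp hσa
    obtain ⟨b, hb, rfl⟩ := Finset.mem_image.mp hσb
    exact hmono (hsub j ha) (hsub j' hb) (hord j j' hjj' a ha b hb)
  · rw [hmins_image]
    exact spreading_iff.1 schreier_spreading _ hmins σ (fun n hn => hσ n (hmins_sub hn))
      (hmono.mono hmins_sub)

def SchreierLimit (𝓐 : ℕ → Set (Finset ℕ)) : Set (Finset ℕ) :=
  {F | F = ∅ ∨ ∃ h : F.Nonempty, ∃ n : ℕ, 1 ≤ n ∧ n ≤ F.min' h ∧ F ∈ 𝓐 n}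

theorem spreading_schreierLimit {𝓐 : ℕ → Set (Finset ℕ)} (hA : ∀ n, Spreading (𝓐 n)) :
    Spreading (SchreierLimit 𝓐) := by
  refine spreading_iff.2 fun F hF σ hσ hmono => ?_
  rcases hF with rfl | ⟨hne, n, hn, hn_le, hFA⟩
  · exact Or.inl (Finset.image_empty σ)
  refine Or.inr ⟨hne.image σ, n, hn, ?_, spreading_iff.1 (hA n) F hFA σ hσ hmono⟩
  rw [Finset.min'_image_of_monotoneOn hmono.monotoneOn hne]
  exact hn_le.trans (hσ _ (F.min'_mem hne))

/-- Every Schreier family `S_α` of countable order `α ≥ 1` is spreading. -/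
theorem schreierFamily_spreading (sys : SchreierSystem) (α : Ordinal)
    (h1 : 1 ≤ α) (hc : α.card ≤ Cardinal.aleph0) :
    Spreading (sys.fam α) := by
  induction α using Ordinal.limitRecOn with
  | zero => exact absurd h1 (by simp)
  | add_one β ih =>
    rcases eq_or_ne β 0 with rfl | hβ
    · rw [zero_add, sys.one_eq]
      exact schreier_spreading
    rw [sys.succ_eq]
    exact (ih (Order.one_le_iff_ne_zero.mpr hβ)
      ((Ordinal.card_le_card (Order.le_succ β)).trans hc)).schreierSucc
  | limit α hlim ih =>
    rw [sys.limit_eq α hlim hc]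
    refine spreading_schreierLimit (𝓐 := fun n => sys.fam (sys.approx α n)) fun n => ?_
    have hlt := sys.approx_lt α hlim hc n
    exact ih _ hlt (sys.approx_pos α n) ((Ordinal.card_le_card hlt.le).trans hc)
end

section
/- Let F be a regular family of finite subsets of ℕ containing all singletons. Then the extreme points of the dual unit ball of the combinatorial space X_F are exactly the functionals ∑_{i∈F} θᵢ eᵢ* where F is a maximal member of F and each θᵢ is a scalar of modulus 1. -/
/-!
Read a functional `g` on `c₀₀` through its coefficients `aᵢ = g eᵢ`. In these coordinates the
dual ball `B` is a closed convex subset of the compact product of unit discs, and by Hahn–Banach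
(a continuous functional on `𝕜^ℕ` sees only finitely many coordinates, so it is pairing with some
`x ∈ c₀₀`, and `‖x‖` is attained on a sign vector) `B` is the closed convex hull of the set `K`
of sign vectors supported on members of `𝓕`. Compactness of `𝓕` makes `K` compact, so by
Milman's converse of the Krein–Milman theorem every extreme point of `B` lies in `K`; its support
`F` is maximal, for otherwise `a ± eⱼ` with `F ∪ {j} ∈ 𝓕` both lie in `B`.

Conversely, let `a` be a sign vector on a maximal `F`. If `a` is the midpoint of a segment in `B`,
the endpoints agree with `a` on `F` because unimodular scalars are extreme in the unit disc, and
they vanish off `F`: testing `b ∈ B` against the signs of `b` on `F ∪ {j}`, a set meeting every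
member of `𝓕` in at most `#F` points, gives `#F + ‖bⱼ‖ ≤ #F`.
-/

open Set Filter Topology Pointwise Metric

section Milman

variable {E : Type*} [AddCommGroup E] [Module ℝ E] [TopologicalSpace E]
  [IsTopologicalAddGroup E] [ContinuousSMul ℝ E]

theorem IsCompact.convexJoin {s t : Set E} (hs : IsCompact s) (ht : IsCompact t) :
    IsCompact (_root_.convexJoin ℝ s t) := by
  have : _root_.convexJoin ℝ s t =
      (fun p : ℝ × E × E => (1 - p.1) • p.2.1 + p.1 • p.2.2) '' Icc 0 1 ×ˢ s ×ˢ t := by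
    ext z
    simp only [mem_convexJoin, segment_eq_image, mem_image, mem_prod, Prod.exists]
    aesop
  rw [this]
  exact (isCompact_Icc.prod (hs.prod ht)).image (by fun_prop)

theorem IsCompact.convexHull_union {s t : Set E} (hs : IsCompact s) (hsc : Convex ℝ s)
    (ht : IsCompact (convexHull ℝ t)) : IsCompact (convexHull ℝ (s ∪ t)) := by
  rcases s.eq_empty_or_nonempty with rfl | hs₀
  · simpa using ht
  rcases t.eq_empty_or_nonempty with rfl | ht₀
  · simpa [hsc.convexHull_eq] using hs
  rw [_root_.convexHull_union hs₀ ht₀, hsc.convexHull_eq]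
  exact hs.convexJoin ht

theorem isCompact_convexHull_biUnion {ι : Type*} (S : Finset ι) {D : ι → Set E}
    (hD : ∀ i ∈ S, IsCompact (D i)) (hDc : ∀ i ∈ S, Convex ℝ (D i)) :
    IsCompact (convexHull ℝ (⋃ i ∈ S, D i)) := by
  classical
  induction S using Finset.induction_on with
  | empty => simp
  | insert a S _ ih =>
    rw [Finset.set_biUnion_insert]
    exact (hD a (S.mem_insert_self a)).convexHull_union (hDc a (S.mem_insert_self a))
      (ih (fun i hi => hD i (Finset.mem_insert_of_mem hi))
        (fun i hi => hDc i (Finset.mem_insert_of_mem hi)))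

theorem extremePoints_closedConvexHull_subset_closure [T2Space E] [LocallyConvexSpace ℝ E]
    {K : Set E} (hK : IsCompact (closedConvexHull ℝ K)) :
    extremePoints ℝ (closedConvexHull ℝ K) ⊆ closure K := by
  intro x hx
  rw [← closure_closure, mem_closure_iff_nhds]
  intro N hN
  have hN₀ : (x - ·) ⁻¹' N ∈ 𝓝 (0 : E) :=
    (continuous_const.sub continuous_id).tendsto' 0 x (sub_zero x) hN
  obtain ⟨V, ⟨hV, hVclosed, -, hVconv⟩, hVN⟩ := (nhds_hasBasis_absConvex_closed ℝ E).mem_iff.1 hN₀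
  obtain ⟨t, htK, hcover⟩ :=
    (hK.of_isClosed_subset isClosed_closure closure_subset_closedConvexHull).elim_nhds_subcover
      (fun k => k +ᵥ V) (fun k _ => by simpa using vadd_mem_nhds_vadd k hV)
  -- Cover `closure K` by finitely many `k + V`; the convex hull of the compact convex pieces
  -- `D k ⊆ k + V` is compact, hence contains the whole closed convex hull, so the extreme point
  -- `x` lies in some `D k` and is `V`-close to `k ∈ closure K`.
  let D : E → Set E := fun k => closedConvexHull ℝ (K ∩ (k +ᵥ V))
  have hDV : ∀ k, D k ⊆ k +ᵥ V := fun k =>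
    closedConvexHull_min inter_subset_right (hVconv.vadd k) (hVclosed.vadd k)
  have hDK : ∀ k, D k ⊆ closedConvexHull ℝ K := fun k =>
    (closedConvexHull ℝ).monotone inter_subset_left
  have hKD : closedConvexHull ℝ K ⊆ convexHull ℝ (⋃ k ∈ t, D k) := by
    refine closedConvexHull_min (fun y hy => ?_) (convex_convexHull ℝ _)
      (isCompact_convexHull_biUnion t (fun k _ => hK.of_isClosed_subset
        isClosed_closedConvexHull (hDK k)) (fun k _ => convex_closedConvexHull)).isClosed
    obtain ⟨k, hk, hyk⟩ := mem_iUnion₂.1 (hcover (subset_closure hy))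
    exact subset_convexHull ℝ _ (mem_iUnion₂.2 ⟨k, hk, subset_closedConvexHull ⟨hy, hyk⟩⟩)
  have hDK' : convexHull ℝ (⋃ k ∈ t, D k) ⊆ closedConvexHull ℝ K :=
    convexHull_min (iUnion₂_subset fun k _ => hDK k) convex_closedConvexHull
  obtain ⟨k, hk, hxk⟩ := mem_iUnion₂.1 <| extremePoints_convexHull_subset <|
    inter_extremePoints_subset_extremePoints_of_subset hDK' ⟨hKD hx.1, hx⟩
  obtain ⟨v, hv, rfl⟩ := mem_vadd_set.1 (hDV k hxk)
  exact ⟨k, by simpa using hVN hv, htK k hk⟩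

end Milman

theorem ContinuousLinearMap.exists_finset_eq_sum_single {ι : Type*} [DecidableEq ι]
    {M : ι → Type*} [∀ i, AddCommGroup (M i)] [∀ i, Module ℝ (M i)] [∀ i, TopologicalSpace (M i)]
    (f : (∀ i, M i) →L[ℝ] ℝ) : ∃ I : Finset ι, ∀ b, f b = ∑ i ∈ I, f (Pi.single i (b i)) := by
  have h₀ : f ⁻¹' Metric.ball 0 1 ∈ 𝓝 (0 : ∀ i, M i) :=
    f.continuous.tendsto' 0 0 (map_zero f) (Metric.ball_mem_nhds 0 one_pos)
  rw [nhds_pi, Filter.mem_pi'] at h₀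
  obtain ⟨I, t, ht, hIt⟩ := h₀
  have hvanish : ∀ b : ∀ i, M i, (∀ i ∈ I, b i = 0) → f b = 0 := by
    intro b hb
    by_contra hfb
    have : (f b)⁻¹ • b ∈ (I : Set ι).pi t := fun i hi => by
      simpa [hb i hi] using mem_of_mem_nhds (ht i)
    simpa [hfb] using hIt this
  refine ⟨I, fun b => ?_⟩
  rw [← map_sum, ← sub_eq_zero, ← map_sub]
  exact hvanish _ fun i hi => by simp [hi]

theorem RCLike.exists_re_mul_eq {𝕜 : Type*} [RCLike 𝕜] (φ : 𝕜 →L[ℝ] ℝ) :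
    ∃ c : 𝕜, ∀ z, φ z = RCLike.re (c * z) :=
  ⟨starRingEnd 𝕜 ((InnerProductSpace.toDual ℝ 𝕜).symm φ), fun z => by
    rw [← InnerProductSpace.toDual_symm_apply, real_inner_eq_re_inner 𝕜, RCLike.inner_apply,
      mul_comm]⟩

section Coefficients

variable {𝕜 : Type*} [RCLike 𝕜] {𝓕 : Set (Finset ℕ)}

theorem combNorm_bddAbove (𝓕 : Set (Finset ℕ)) (x : ℕ →₀ 𝕜) :
    BddAbove {r : ℝ | ∃ F ∈ 𝓕, r = ∑ i ∈ F, ‖x i‖} := by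
  refine ⟨∑ i ∈ x.support, ‖x i‖, ?_⟩
  rintro r ⟨F, -, rfl⟩
  calc ∑ i ∈ F, ‖x i‖ = ∑ i ∈ F ∩ x.support, ‖x i‖ :=
        (Finset.sum_subset Finset.inter_subset_left fun i hi hni => by
          simpa [hi] using hni).symm
    _ ≤ ∑ i ∈ x.support, ‖x i‖ :=
        Finset.sum_le_sum_of_subset_of_nonneg Finset.inter_subset_right fun _ _ _ => norm_nonneg _

theorem sum_norm_le_combNorm {F : Finset ℕ} (hF : F ∈ 𝓕) (x : ℕ →₀ 𝕜) :
    ∑ i ∈ F, ‖x i‖ ≤ combNorm 𝓕 x :=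
  le_csSup (combNorm_bddAbove 𝓕 x) ⟨F, hF, rfl⟩

theorem combNorm_le (h𝓕 : 𝓕.Nonempty) {x : ℕ →₀ 𝕜} {c : ℝ}
    (h : ∀ F ∈ 𝓕, ∑ i ∈ F, ‖x i‖ ≤ c) : combNorm 𝓕 x ≤ c :=
  csSup_le (h𝓕.elim fun F hF => ⟨_, F, hF, rfl⟩) (by rintro r ⟨F, hF, rfl⟩; exact h F hF)

local notation "pairing" => Finsupp.llift 𝕜 𝕜 ℝ ℕ

theorem llift_apply_eq_sum {F : Finset ℕ} {a : ℕ → 𝕜} (ha : ∀ i ∉ F, a i = 0) (x : ℕ →₀ 𝕜) :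
    pairing a x = ∑ i ∈ F, x i * a i := by
  rw [Finsupp.llift_apply, Finsupp.lift_apply, Finsupp.sum]
  simp only [smul_eq_mul]
  calc ∑ i ∈ x.support, x i * a i = ∑ i ∈ x.support ∪ F, x i * a i :=
        Finset.sum_subset Finset.subset_union_left fun i _ hi => by
          simp [Finsupp.notMem_support_iff.1 hi]
    _ = ∑ i ∈ F, x i * a i :=
        (Finset.sum_subset Finset.subset_union_right fun i _ hi => by simp [ha i hi]).symm

theorem llift_eq_sum_lapply {F : Finset ℕ} {a : ℕ → 𝕜} (ha : ∀ i ∉ F, a i = 0) :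
    pairing a = ∑ i ∈ F, a i • (Finsupp.lapply i : (ℕ →₀ 𝕜) →ₗ[𝕜] 𝕜) := by
  ext x
  simp [llift_apply_eq_sum ha, mul_comm]

theorem llift_sum_single (a : ℕ → 𝕜) (A : Finset ℕ) (c : ℕ → 𝕜) :
    pairing a (∑ i ∈ A, Finsupp.single i (c i)) = ∑ i ∈ A, c i * a i := by
  simp [map_sum, Finsupp.llift_apply]

theorem sum_single_apply (A : Finset ℕ) (c : ℕ → 𝕜) (j : ℕ) :
    (∑ i ∈ A, Finsupp.single i (c i)) j = if j ∈ A then c j else 0 := by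
  simp [Finsupp.finsetSum_apply, Finsupp.single_apply]

variable (𝕜) in
/-- A coefficient sequence `a` stands for the functional `∑ aᵢ eᵢ*`; the product topology on
`ℕ → 𝕜` is then the weak* topology. -/
def dualBall (𝓕 : Set (Finset ℕ)) : Set (ℕ → 𝕜) :=
  pairing ⁻¹' {g | ∀ x : ℕ →₀ 𝕜, ‖g x‖ ≤ combNorm 𝓕 x}

def IsSignVectorOn (F : Finset ℕ) (a : ℕ → 𝕜) : Prop :=
  (∀ i ∈ F, ‖a i‖ = 1) ∧ ∀ i ∉ F, a i = 0

variable (𝕜) in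
def signVectors (𝓕 : Set (Finset ℕ)) : Set (ℕ → 𝕜) :=
  {a | ∃ F ∈ 𝓕, IsSignVectorOn F a}

theorem mem_dualBall {a : ℕ → 𝕜} :
    a ∈ dualBall 𝕜 𝓕 ↔ ∀ x : ℕ →₀ 𝕜, ‖pairing a x‖ ≤ combNorm 𝓕 x :=
  Iff.rfl

theorem convex_dualBall : Convex ℝ (dualBall 𝕜 𝓕) := by
  intro a ha b hb s t hs ht hst x
  simp only [map_add, map_smul, LinearMap.add_apply, LinearMap.smul_apply]
  calc ‖s • pairing a x + t • pairing b x‖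
      ≤ s * ‖pairing a x‖ + t * ‖pairing b x‖ := by
        refine (norm_add_le _ _).trans_eq ?_
        rw [norm_smul, norm_smul, Real.norm_of_nonneg hs, Real.norm_of_nonneg ht]
    _ ≤ s * combNorm 𝓕 x + t * combNorm 𝓕 x := by gcongr; exacts [ha x, hb x]
    _ = combNorm 𝓕 x := by rw [← add_mul, hst, one_mul]

theorem isClosed_dualBall : IsClosed (dualBall 𝕜 𝓕) := by
  have : dualBall 𝕜 𝓕 = ⋂ x : ℕ →₀ 𝕜, {a | ‖pairing a x‖ ≤ combNorm 𝓕 x} := by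
    ext
    simp [mem_dualBall]
  rw [this]
  refine isClosed_iInter fun x => isClosed_le ?_ continuous_const
  simp only [Finsupp.llift_apply, Finsupp.lift_apply, Finsupp.sum]
  fun_prop

theorem mem_dualBall_of_norm_le_one {F : Finset ℕ} (hF : F ∈ 𝓕) {a : ℕ → 𝕜}
    (ha₁ : ∀ i ∈ F, ‖a i‖ ≤ 1) (ha₀ : ∀ i ∉ F, a i = 0) : a ∈ dualBall 𝕜 𝓕 := by
  intro x
  rw [llift_apply_eq_sum ha₀]
  refine (norm_sum_le _ _).trans ((Finset.sum_le_sum fun i hi => ?_).trans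
    (sum_norm_le_combNorm hF x))
  rw [norm_mul]
  exact mul_le_of_le_one_right (norm_nonneg _) (ha₁ i hi)

theorem signVectors_subset_dualBall : signVectors 𝕜 𝓕 ⊆ dualBall 𝕜 𝓕 :=
  fun _ ⟨_, hF, ha₁, ha₀⟩ => mem_dualBall_of_norm_le_one hF (fun i hi => (ha₁ i hi).le) ha₀

theorem sum_norm_le_of_mem_dualBall (h𝓕 : 𝓕.Nonempty) {a : ℕ → 𝕜} (ha : a ∈ dualBall 𝕜 𝓕)
    {A : Finset ℕ} {n : ℕ} (hA : ∀ G ∈ 𝓕, (G ∩ A).card ≤ n) : ∑ i ∈ A, ‖a i‖ ≤ n := by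
  choose θ hθ₁ hθ using fun i => RCLike.exists_norm_eq_mul_self (a i)
  have hx : pairing a (∑ i ∈ A, Finsupp.single i (θ i)) = ((∑ i ∈ A, ‖a i‖ : ℝ) : 𝕜) := by
    rw [llift_sum_single]
    push_cast
    exact Finset.sum_congr rfl fun i _ => (hθ i).symm
  calc ∑ i ∈ A, ‖a i‖ = ‖pairing a (∑ i ∈ A, Finsupp.single i (θ i))‖ := by
        rw [hx, RCLike.norm_ofReal, abs_of_nonneg (Finset.sum_nonneg fun _ _ => norm_nonneg _)]
    _ ≤ combNorm 𝓕 (∑ i ∈ A, Finsupp.single i (θ i)) := ha _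
    _ ≤ n := combNorm_le h𝓕 fun G hG => by
        simp only [sum_single_apply, apply_ite norm, hθ₁, norm_zero, Finset.sum_ite_mem,
          Finset.sum_const, nsmul_eq_mul, mul_one]
        exact_mod_cast hA G hG

theorem norm_le_one_of_mem_dualBall (h𝓕 : 𝓕.Nonempty) {a : ℕ → 𝕜} (ha : a ∈ dualBall 𝕜 𝓕)
    (i : ℕ) : ‖a i‖ ≤ 1 := by
  simpa using sum_norm_le_of_mem_dualBall h𝓕 ha (A := {i}) (n := 1)
    fun G _ => (Finset.card_le_card Finset.inter_subset_right).trans_eq (Finset.card_singleton i)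

theorem isCompact_dualBall (h𝓕 : 𝓕.Nonempty) : IsCompact (dualBall 𝕜 𝓕) :=
  (isCompact_univ_pi fun _ => isCompact_closedBall (0 : 𝕜) 1).of_isClosed_subset
    isClosed_dualBall fun _ ha i _ =>
      mem_closedBall_zero_iff.2 (norm_le_one_of_mem_dualBall h𝓕 ha i)

theorem isSignVectorOn_of_mem_dualBall (hher : Hereditary 𝓕) {F : Finset ℕ}
    (hmax : MaximalIn 𝓕 F) {a : ℕ → 𝕜} (ha : a ∈ dualBall 𝕜 𝓕) (hF : ∀ i ∈ F, ‖a i‖ = 1) :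
    IsSignVectorOn F a := by
  refine ⟨hF, fun j hj => ?_⟩
  have hA : ∀ G ∈ 𝓕, (G ∩ insert j F).card ≤ F.card := by
    intro G hG
    by_contra! hlt
    have hGF : G ∩ insert j F = insert j F := Finset.eq_of_subset_of_card_le
      Finset.inter_subset_right (by rw [Finset.card_insert_of_notMem hj]; omega)
    have := hmax.2 _ (hher G hG _ (hGF ▸ Finset.inter_subset_left)) (Finset.subset_insert j F)
    exact hj (this ▸ Finset.mem_insert_self j F)
  have hsum := sum_norm_le_of_mem_dualBall ⟨F, hmax.1⟩ ha hA
  rw [Finset.sum_insert hj, Finset.sum_congr rfl hF, Finset.sum_const, nsmul_one] at hsum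
  exact norm_le_zero_iff.1 (by linarith)

theorem mem_extremePoints_dualBall (hher : Hereditary 𝓕) {F : Finset ℕ} (hmax : MaximalIn 𝓕 F)
    {a : ℕ → 𝕜} (ha : IsSignVectorOn F a) : a ∈ extremePoints ℝ (dualBall 𝕜 𝓕) := by
  refine ⟨mem_dualBall_of_norm_le_one hmax.1 (fun i hi => (ha.1 i hi).le) ha.2,
    fun b hb c hc hbc => ?_⟩
  have hbF : ∀ i ∈ F, b i = a i := by
    intro i hi
    have hext : a i ∈ extremePoints ℝ (closedBall (0 : 𝕜) 1) := by
      rw [StrictConvexSpace.extremePoints_closedBall_eq_sphere, mem_sphere_zero_iff_norm]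
      exact ha.1 i hi
    obtain ⟨s, t, hs, ht, hst, h⟩ := hbc
    refine hext.2 ?_ ?_ ⟨s, t, hs, ht, hst, by simpa using congrFun h i⟩
    · exact mem_closedBall_zero_iff.2 (norm_le_one_of_mem_dualBall ⟨F, hmax.1⟩ hb i)
    · exact mem_closedBall_zero_iff.2 (norm_le_one_of_mem_dualBall ⟨F, hmax.1⟩ hc i)
  funext i
  by_cases hi : i ∈ F
  · exact hbF i hi
  · rw [ha.2 i hi]
    exact (isSignVectorOn_of_mem_dualBall hher hmax hb fun k hk => hbF k hk ▸ ha.1 k hk).2 i hi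

theorem maximalIn_of_mem_extremePoints (hher : Hereditary 𝓕) {a : ℕ → 𝕜}
    (he : a ∈ extremePoints ℝ (dualBall 𝕜 𝓕)) {F : Finset ℕ} (hF : F ∈ 𝓕)
    (ha : IsSignVectorOn F a) : MaximalIn 𝓕 F := by
  refine ⟨hF, fun G hG hFG => ?_⟩
  by_contra hne
  obtain ⟨j, hjG, hjF⟩ := Finset.exists_of_ssubset (hFG.ssubset_of_ne hne)
  have hjF𝓕 : insert j F ∈ 𝓕 := hher G hG _ (Finset.insert_subset hjG hFG)
  have hmem : ∀ t : 𝕜, ‖t‖ ≤ 1 → a + Pi.single j t ∈ dualBall 𝕜 𝓕 := by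
    intro t ht
    refine mem_dualBall_of_norm_le_one hjF𝓕 (fun i hi => ?_) (fun i hi => ?_)
    · rcases Finset.mem_insert.1 hi with rfl | hi
      · simpa [ha.2 i hjF] using ht
      · simp [ne_of_mem_of_not_mem hi hjF, ha.1 i hi]
    · simp [ha.2 i (fun h => hi (Finset.mem_insert_of_mem h)),
        show i ≠ j from fun h => hi (h ▸ Finset.mem_insert_self j F)]
  have hminus : a - Pi.single j 1 ∈ dualBall 𝕜 𝓕 := by
    rw [sub_eq_add_neg, ← Pi.single_neg]
    exact hmem (-1) (by simp)
  have h := he.2 hminus (hmem 1 (by simp)) (mem_openSegment_sub_add a (Pi.single j (1 : 𝕜)))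
  simpa using congrFun h j

theorem exists_finsupp_eq_re_llift (f : (ℕ → 𝕜) →L[ℝ] ℝ) :
    ∃ x : ℕ →₀ 𝕜, ∀ b, f b = RCLike.re (pairing b x) := by
  obtain ⟨I, hI⟩ := f.exists_finset_eq_sum_single
  choose c hc using fun i =>
    RCLike.exists_re_mul_eq (f.comp (ContinuousLinearMap.single ℝ (fun _ : ℕ => 𝕜) i))
  refine ⟨∑ i ∈ I, Finsupp.single i (c i), fun b => ?_⟩
  rw [hI, llift_sum_single, map_sum]
  exact Finset.sum_congr rfl fun i _ => hc i (b i)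

theorem exists_mem_signVectors_llift_eq {F : Finset ℕ} (hF : F ∈ 𝓕) (x : ℕ →₀ 𝕜) :
    ∃ b ∈ signVectors 𝕜 𝓕, pairing b x = ((∑ i ∈ F, ‖x i‖ : ℝ) : 𝕜) := by
  choose θ hθ₁ hθ using fun i => RCLike.exists_norm_eq_mul_self (x i)
  have hb₀ : ∀ i ∉ F, (if i ∈ F then θ i else 0) = 0 := fun i hi => if_neg hi
  refine ⟨fun i => if i ∈ F then θ i else 0, ⟨F, hF, fun i hi => by simp [hi, hθ₁], hb₀⟩, ?_⟩
  rw [llift_apply_eq_sum hb₀]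
  push_cast
  exact Finset.sum_congr rfl fun i hi => by simp [hi, hθ, mul_comm]

theorem dualBall_subset_closedConvexHull (h𝓕 : 𝓕.Nonempty) :
    dualBall 𝕜 𝓕 ⊆ closedConvexHull ℝ (signVectors 𝕜 𝓕) := by
  intro a ha
  by_contra hC
  obtain ⟨f, u, hfC, hfa⟩ :=
    geometric_hahn_banach_closed_point convex_closedConvexHull isClosed_closedConvexHull hC
  obtain ⟨x, hx⟩ := exists_finsupp_eq_re_llift f
  have hxu : combNorm 𝓕 x ≤ u := combNorm_le h𝓕 fun F hF => by
    obtain ⟨b, hb, hbx⟩ := exists_mem_signVectors_llift_eq hF x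
    simpa [hx, hbx] using (hfC b (subset_closedConvexHull hb)).le
  have hax : f a ≤ combNorm 𝓕 x := (hx a).symm ▸ (RCLike.re_le_norm _).trans (ha x)
  linarith

theorem closedConvexHull_signVectors (h𝓕 : 𝓕.Nonempty) :
    closedConvexHull ℝ (signVectors 𝕜 𝓕) = dualBall 𝕜 𝓕 := by
  refine subset_antisymm ?_ (dualBall_subset_closedConvexHull h𝓕)
  exact closedConvexHull_min signVectors_subset_dualBall convex_dualBall isClosed_dualBall

theorem isCompact_signVectors (hcomp : CompactFamily 𝓕) : IsCompact (signVectors 𝕜 𝓕) := by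
  have : signVectors 𝕜 𝓕 =
      (fun p : (ℕ → Bool) × (ℕ → 𝕜) => fun i => (if p.1 i then 1 else 0) * p.2 i) ''
        ({f | ∃ F ∈ 𝓕, f = fun n => decide (n ∈ F)} ×ˢ univ.pi fun _ => sphere 0 1) := by
    ext a
    constructor
    · rintro ⟨F, hF, ha₁, ha₀⟩
      refine ⟨(fun n => decide (n ∈ F), fun i => if i ∈ F then a i else 1),
        ⟨⟨F, hF, rfl⟩, fun i _ => ?_⟩, funext fun i => ?_⟩ <;>
        by_cases hi : i ∈ F <;> simp [hi, ha₁, ha₀]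
    · rintro ⟨⟨f, θ⟩, ⟨⟨F, hF, rfl⟩, hθ⟩, rfl⟩
      exact ⟨F, hF, fun i hi => by simpa [hi] using hθ i trivial, fun i hi => by simp [hi]⟩
  rw [this]
  exact (hcomp.isCompact.prod (isCompact_univ_pi fun _ => isCompact_sphere 0 1)).image <|
    continuous_pi fun i =>
      ((continuous_of_discreteTopology (f := fun b : Bool => if b then (1 : 𝕜) else 0)).comp
        ((continuous_apply i).comp continuous_fst)).mul ((continuous_apply i).comp continuous_snd)

theorem extremePoints_dualBall_subset_signVectors (hcomp : CompactFamily 𝓕) (h𝓕 : 𝓕.Nonempty) :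
    extremePoints ℝ (dualBall 𝕜 𝓕) ⊆ signVectors 𝕜 𝓕 := by
  have hK : IsCompact (closedConvexHull ℝ (signVectors 𝕜 𝓕)) := by
    rw [closedConvexHull_signVectors h𝓕]
    exact isCompact_dualBall h𝓕
  have h := extremePoints_closedConvexHull_subset_closure hK
  rwa [closedConvexHull_signVectors h𝓕, (isCompact_signVectors hcomp).isClosed.closure_eq] at h

theorem extremePoints_dualBall (hher : Hereditary 𝓕) (hcomp : CompactFamily 𝓕)
    (h𝓕 : 𝓕.Nonempty) :
    extremePoints ℝ (dualBall 𝕜 𝓕) = {a | ∃ F, MaximalIn 𝓕 F ∧ IsSignVectorOn F a} := by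
  ext a
  constructor
  · intro he
    obtain ⟨F, hF, ha⟩ := extremePoints_dualBall_subset_signVectors hcomp h𝓕 he
    exact ⟨F, maximalIn_of_mem_extremePoints hher he hF ha, ha⟩
  · rintro ⟨F, hmax, ha⟩
    exact mem_extremePoints_dualBall hher hmax ha

end Coefficients

/-- The extreme points of the dual unit ball of a combinatorial space `X_𝓕` are exactly
the functionals `∑_{i∈F} θᵢ eᵢ*` with `F` a maximal member of `𝓕` and each `θᵢ` a sign. -/
theorem extremePoints_dual_ball {𝕜 : Type*} [RCLike 𝕜]
    (𝓕 : Set (Finset ℕ)) (hreg : RegularFamily 𝓕) :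
    Set.extremePoints ℝ {g : (ℕ →₀ 𝕜) →ₗ[𝕜] 𝕜 | ∀ x : ℕ →₀ 𝕜, ‖g x‖ ≤ combNorm 𝓕 x} =
      {g | ∃ F : Finset ℕ, MaximalIn 𝓕 F ∧ ∃ θ : ℕ → 𝕜, (∀ i ∈ F, ‖θ i‖ = 1) ∧
        g = ∑ i ∈ F, θ i • (Finsupp.lapply i : (ℕ →₀ 𝕜) →ₗ[𝕜] 𝕜)} := by
  obtain ⟨hher, -, hcomp, hsingle⟩ := hreg
  have hball : {g : (ℕ →₀ 𝕜) →ₗ[𝕜] 𝕜 | ∀ x : ℕ →₀ 𝕜, ‖g x‖ ≤ combNorm 𝓕 x} =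
      Finsupp.llift 𝕜 𝕜 ℝ ℕ '' dualBall 𝕜 𝓕 :=
    ((Finsupp.llift 𝕜 𝕜 ℝ ℕ).surjective.image_preimage _).symm
  rw [hball, ← image_extremePoints, extremePoints_dualBall hher hcomp ⟨_, hsingle 0⟩]
  ext g
  constructor
  · rintro ⟨a, ⟨F, hmax, ha⟩, rfl⟩
    exact ⟨F, hmax, a, ha.1, llift_eq_sum_lapply ha.2⟩
  · rintro ⟨F, hmax, θ, hθ, rfl⟩
    have ha₀ : ∀ i ∉ F, (if i ∈ F then θ i else 0) = 0 := fun i hi => if_neg hi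
    refine ⟨_, ⟨F, hmax, fun i hi => by simp [hi, hθ i hi], ha₀⟩, ?_⟩
    rw [llift_eq_sum_lapply ha₀]
    exact Finset.sum_congr rfl fun i hi => by rw [if_pos hi]
end
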